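/- arXiv:1909.03896 — 2 statements merged into one kernel-verified Lean document; each statement's English description precedes it below -/
import Mathlib

section
/- Let (A_v)_{v ∈ V} be a finite family of arcs on the circle ℝ/ℤ and let G be its circular-arc intersection graph. Suppose G is triangle-free and W is a closed walk in G that is a cycle. Then the union of the arcs A_v over all vertices v visited by W equals the entire circle ℝ/ℤ. -/
/-!
If a point `p` of the circle were missed by every arc of the cycle, cutting the circle at `p`
would turn these arcs into real intervals inside `(p, p + 1)` with the same intersection pattern.
Among the vertices of the cycle take `m` whose interval ends first: both cycle-neighbours of `m`
meet its interval and end no earlier, so both contain its right endpoint. They are therefore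
adjacent and form a triangle with `m`.
-/

/-- The intersection graph of a family of sets `A : V → Set X`: distinct indices
`u, v` are adjacent iff `A u ∩ A v ≠ ∅`. -/
def intersectionGraph {V X : Type*} (A : V → Set X) : SimpleGraph V where
  Adj u v := u ≠ v ∧ (A u ∩ A v).Nonempty
  symm := by
    constructor
    rintro u v ⟨hne, x, hx1, hx2⟩
    exact ⟨hne.symm, x, hx2, hx1⟩
  loopless := by
    constructor
    rintro u ⟨hne, -⟩
    exact hne rfl

/-- The arc on the circle `ℝ/ℤ` obtained by projecting the closed real interval `[a, b]`. -/
def arc (a b : ℝ) : Set (AddCircle (1 : ℝ)) :=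
  (fun x : ℝ => (x : AddCircle (1 : ℝ))) '' Set.Icc a b

open Set

lemma coe_sub_intCast (x : ℝ) (n : ℤ) : ((x - n : ℝ) : AddCircle (1 : ℝ)) = x := by
  have hn : ((n : ℝ) : AddCircle (1 : ℝ)) = 0 := (AddCircle.coe_eq_zero_iff 1).2 ⟨n, by simp⟩
  rw [AddCircle.coe_sub, hn, sub_zero]

lemma arc_sub_intCast (a b : ℝ) (n : ℤ) : arc (a - n) (b - n) = arc a b := by
  simp only [arc, ← image_sub_const_Icc, image_image, coe_sub_intCast]

lemma injOn_coe_Ico (p : ℝ) : InjOn (fun x : ℝ => (x : AddCircle (1 : ℝ))) (Ico p (p + 1)) :=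
  fun x hx y hy h => by
    simpa [AddCircle.equivIco_coe_eq hx, AddCircle.equivIco_coe_eq hy] using
      congrArg (AddCircle.equivIco 1 p) h

lemma arc_inter_nonempty_iff_of_subset_Ico {l r l' r' p : ℝ} (h : Icc l r ⊆ Ico p (p + 1))
    (h' : Icc l' r' ⊆ Ico p (p + 1)) :
    (arc l r ∩ arc l' r').Nonempty ↔ (Icc l r ∩ Icc l' r').Nonempty := by
  rw [arc, arc, ← (injOn_coe_Ico p).image_inter h h', image_nonempty]

lemma Icc_sub_floor_subset_Ioo {a b p : ℝ} (hp : (p : AddCircle (1 : ℝ)) ∉ arc a b) :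
    Icc (a - ⌊a - p⌋) (b - ⌊a - p⌋) ⊆ Ioo p (p + 1) := by
  set n := ⌊a - p⌋
  have hmem : ∀ y ∈ Icc (a - n) (b - n), (y : AddCircle (1 : ℝ)) ∈ arc a b :=
    fun y hy => arc_sub_intCast a b n ▸ mem_image_of_mem _ hy
  have hp_le : p ≤ a - n := by linarith [Int.floor_le (a - p)]
  have hlt : a - n < p + 1 := by linarith [Int.lt_floor_add_one (a - p)]
  intro t ⟨hst, htb⟩
  constructor
  · rcases hp_le.lt_or_eq with hps | hps
    · exact hps.trans_le hst
    · exact absurd (hmem p ⟨hps.ge, hps ▸ hst.trans htb⟩) hp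
  · by_contra! hpt
    exact hp (AddCircle.coe_add_period 1 p ▸ hmem (p + 1) ⟨hlt.le, hpt.trans htb⟩)

lemma right_mem_Icc_of_inter_nonempty {α : Type*} [Preorder α] {l r l' r' : α}
    (h : (Icc l r ∩ Icc l' r').Nonempty) (hr : r ≤ r') : r ∈ Icc l' r' :=
  let ⟨_, ⟨_, hyr⟩, hly, _⟩ := h
  ⟨hly.trans hyr, hr⟩

namespace SimpleGraph.Walk.IsCycle

variable {V : Type*} {G : SimpleGraph V} {v : V} {c : G.Walk v v}

lemma exists_adj_adj [DecidableEq V] (hc : c.IsCycle) {u : V} (hu : u ∈ c.support) :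
    ∃ w w', w ≠ w' ∧ G.Adj u w ∧ G.Adj u w' ∧ w ∈ c.support ∧ w' ∈ c.support := by
  have hc' := hc.rotate hu
  refine ⟨_, _, hc'.snd_ne_penultimate, adj_snd hc'.not_nil, (adj_penultimate hc'.not_nil).symm,
    ?_, ?_⟩ <;> exact (mem_support_rotate_iff c u hu).1 (getVert_mem_support _ _)

lemma not_cliqueFree_three_of_adj_iff_Icc {α : Type*} [LinearOrder α] (hc : c.IsCycle)
    (l r : V → α)
    (hG : ∀ u ∈ c.support, ∀ w ∈ c.support,
      G.Adj u w ↔ u ≠ w ∧ (Icc (l u) (r u) ∩ Icc (l w) (r w)).Nonempty) :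
    ¬ G.CliqueFree 3 := by
  classical
  obtain ⟨m, hm, hmin⟩ := c.support.toFinset.exists_min_image r ⟨v, by simp⟩
  rw [List.mem_toFinset] at hm
  obtain ⟨u, w, huw, hmu, hmw, hu, hw⟩ := hc.exists_adj_adj hm
  have hcommon : ∀ y ∈ c.support, G.Adj m y → r m ∈ Icc (l y) (r y) := fun y hy hadj =>
    right_mem_Icc_of_inter_nonempty ((hG m hm y hy).1 hadj).2 (hmin y (List.mem_toFinset.2 hy))
  have hadj : G.Adj u w := (hG u hu w hw).2 ⟨huw, r m, hcommon u hu hmu, hcommon w hw hmw⟩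
  exact fun h => h {m, u, w} (is3Clique_triple_iff.2 ⟨hmu, hmw, hadj⟩)

end SimpleGraph.Walk.IsCycle

theorem stmt5_general {V : Type*} (a b : V → ℝ)
    (htf : (intersectionGraph fun v => arc (a v) (b v)).CliqueFree 3)
    (x : V) (W : (intersectionGraph fun v => arc (a v) (b v)).Walk x x)
    (hW : W.IsCycle) :
    ⋃ v ∈ W.support, arc (a v) (b v) = Set.univ := by
  refine eq_univ_of_forall fun z => ?_
  obtain ⟨p, rfl⟩ := QuotientAddGroup.mk_surjective z
  by_contra hp
  simp only [mem_iUnion, not_exists] at hp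
  set n : V → ℤ := fun v => ⌊a v - p⌋
  have hlift : ∀ v ∈ W.support, Icc (a v - n v) (b v - n v) ⊆ Ico p (p + 1) := fun v hv =>
    (Icc_sub_floor_subset_Ioo (hp v hv)).trans Ioo_subset_Ico_self
  refine hW.not_cliqueFree_three_of_adj_iff_Icc (fun v => a v - n v) (fun v => b v - n v)
    (fun u hu w hw => ?_) htf
  rw [← arc_inter_nonempty_iff_of_subset_Ico (hlift u hu) (hlift w hw), arc_sub_intCast,
    arc_sub_intCast]
  rfl

theorem stmt5 {V : Type*} [Fintype V] (a b : V → ℝ) (hab : ∀ v, a v ≤ b v)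
    (htf : (intersectionGraph fun v => arc (a v) (b v)).CliqueFree 3)
    (x : V) (W : (intersectionGraph fun v => arc (a v) (b v)).Walk x x)
    (hW : W.IsCycle) :
    ⋃ v ∈ W.support, arc (a v) (b v) = Set.univ :=
  stmt5_general a b htf x W hW
end

section
/- Let (A_v)_{v ∈ V} be a finite family of arcs on the circle ℝ/ℤ and let G be its circular-arc intersection graph. Let t be the maximum cardinality of a subset of V inducing a triangle-free subgraph of G. Then there exists a subset S ⊆ V with |S| ≥ t − 1 such that the subgraph of G induced by S is acyclic (a forest). -/
/-!
If an arc of a maximum triangle-free set `S` covers the whole circle, it meets every other arc,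
so the other arcs are pairwise disjoint. Otherwise cut the circle at the left endpoint `p` of an
arc `v₀ ∈ S`. The arcs through `p` form a clique, so apart from `v₀` there is at most one of them,
which we discard. Every remaining arc lifts to an interval of `[p, p + 1)`, and lifting preserves
intersections, so what is left is a triangle-free interval graph. Such a graph is a forest: on a
cycle, the vertex with the largest left endpoint and its two neighbours all contain that endpoint.
-/

open Set SimpleGraph

section IntersectionGraph

variable {V X : Type*}

lemma intersectionGraph_adj {A : V → Set X} {u v : V} :
    (intersectionGraph A).Adj u v ↔ u ≠ v ∧ (A u ∩ A v).Nonempty := Iff.rfl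

lemma intersectionGraph_induce (A : V → Set X) (s : Set V) :
    (intersectionGraph A).induce s = intersectionGraph fun v : s => A v := by
  ext u v
  simp [intersectionGraph_adj, Subtype.ext_iff]

lemma intersectionGraph_image_of_injOn {Y : Type*} {f : X → Y} {U : Set X} (hf : InjOn f U)
    {B : V → Set X} (hB : ∀ v, B v ⊆ U) :
    intersectionGraph (fun v => f '' B v) = intersectionGraph B := by
  ext u v
  simp only [intersectionGraph_adj, ← hf.image_inter (hB u) (hB v), image_nonempty]

lemma card_filter_mem_le_two_of_cliqueFree {A : V → Set X} {S : Finset V}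
    (hS : ((intersectionGraph A).induce (S : Set V)).CliqueFree 3) (p : X)
    [DecidablePred (p ∈ A ·)] : (S.filter (p ∈ A ·)).card ≤ 2 := by
  classical
  by_contra! h
  obtain ⟨x, hx, y, hy, z, hz, hxy, hxz, hyz⟩ := Finset.two_lt_card.1 h
  simp only [Finset.mem_filter] at hx hy hz
  refine hS {⟨x, hx.1⟩, ⟨y, hy.1⟩, ⟨z, hz.1⟩} (is3Clique_triple_iff.2 ⟨?_, ?_, ?_⟩)
  · exact ⟨hxy, p, hx.2, hy.2⟩
  · exact ⟨hxz, p, hx.2, hz.2⟩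
  · exact ⟨hyz, p, hy.2, hz.2⟩

end IntersectionGraph

lemma SimpleGraph.induce_erase_eq_bot_of_cliqueFree {V : Type*} [DecidableEq V]
    {G : SimpleGraph V} {S : Finset V} (hS : (G.induce (S : Set V)).CliqueFree 3) {u : V}
    (hu : u ∈ S) (hadj : ∀ v ∈ S, v ≠ u → G.Adj u v) :
    G.induce (S.erase u : Set V) = ⊥ := by
  ext ⟨x, hx⟩ ⟨y, hy⟩
  simp only [Finset.coe_erase, mem_sdiff, Finset.mem_coe, mem_singleton_iff] at hx hy
  simp only [comap_adj, Function.Embedding.coe_subtype, bot_adj, iff_false]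
  intro hxy
  refine hS {⟨u, hu⟩, ⟨x, hx.1⟩, ⟨y, hy.1⟩} (is3Clique_triple_iff.2 ⟨?_, ?_, ?_⟩)
  · exact hadj x hx.1 hx.2
  · exact hadj y hy.1 hy.2
  · exact hxy

theorem intersectionGraph_Icc_isAcyclic {W L : Type*} [LinearOrder L] (α β : W → L)
    (h : (intersectionGraph fun w => Icc (α w) (β w)).CliqueFree 3) :
    (intersectionGraph fun w => Icc (α w) (β w)).IsAcyclic := by
  classical
  intro v c hc
  obtain ⟨j, hj, hmax⟩ := c.support.toFinset.exists_max_image α ⟨v, by simp⟩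
  rw [List.mem_toFinset] at hj
  set d := c.rotate j hj
  have hd : d.IsCycle := hc.rotate hj
  have hmem : ∀ u ∈ d.support, (intersectionGraph fun w => Icc (α w) (β w)).Adj j u →
      α j ∈ Icc (α u) (β u) := by
    rintro u hu ⟨-, x, hxj, hxu⟩
    exact ⟨hmax u (by simpa [d] using hu), hxj.1.trans hxu.2⟩
  have hsnd := d.adj_snd hd.not_nil
  have hpen := (d.adj_penultimate hd.not_nil).symm
  exact h {j, d.snd, d.penultimate} (is3Clique_triple_iff.2 ⟨hsnd, hpen,
    hd.snd_ne_penultimate, α j, hmem _ (d.getVert_mem_support 1) hsnd,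
    hmem _ (d.getVert_mem_support _) hpen⟩)

lemma arc_sub_zsmul (a b : ℝ) (n : ℤ) : arc (a - n • 1) (b - n • 1) = arc a b := by
  simp only [arc, ← image_sub_const_Icc, image_image, AddCircle.coe_sub, AddCircle.coe_zsmul,
    AddCircle.coe_period, smul_zero, sub_zero]

lemma arc_eq_univ {a b : ℝ} (h : 1 ≤ b - a) : arc a b = univ := by
  have : Fact ((0 : ℝ) < 1) := ⟨one_pos⟩
  refine eq_univ_of_univ_subset ?_
  rw [← AddCircle.coe_image_Icc_eq 1 a]
  exact image_mono (Icc_subset_Icc le_rfl (by linarith))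

lemma injOn_coe_Ico_s7 (m : ℝ) : InjOn ((↑) : ℝ → AddCircle (1 : ℝ)) (Ico m (m + 1)) :=
  have : Fact ((0 : ℝ) < 1) := ⟨one_pos⟩
  fun _ hx _ hy h => (AddCircle.coe_eq_coe_iff_of_mem_Ico hx hy).1 h

lemma exists_arc_eq_Icc_subset_Ico {a b : ℝ} (m : ℝ) (hba : b - a < 1)
    (hm : (m : AddCircle (1 : ℝ)) ∈ arc a b → (a : AddCircle (1 : ℝ)) = m) :
    ∃ a' b', arc a b = arc a' b' ∧ Icc a' b' ⊆ Ico m (m + 1) := by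
  set n := toIcoDiv one_pos m a
  have ha' : a - n • 1 ∈ Ico m (m + 1) := by
    rw [self_sub_toIcoDiv_zsmul]; exact toIcoMod_mem_Ico _ _ _
  refine ⟨a - n • 1, b - n • 1, (arc_sub_zsmul a b n).symm, fun x hx => ⟨ha'.1.trans hx.1, ?_⟩⟩
  refine hx.2.trans_lt (not_le.1 fun hb => ?_)
  have hm' : (m : AddCircle (1 : ℝ)) ∈ arc a b := by
    rw [← arc_sub_zsmul a b n, ← AddCircle.coe_add_period]
    exact mem_image_of_mem _ ⟨ha'.2.le, hb⟩
  have : a - n • 1 = m := injOn_coe_Ico_s7 m ha' (left_mem_Ico.2 (by linarith)) (by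
    rw [AddCircle.coe_sub, AddCircle.coe_zsmul, AddCircle.coe_period, smul_zero, sub_zero]
    exact hm hm')
  linarith

lemma isAcyclic_induce_of_forall_arc_eq {V : Type*} {A : V → Set (AddCircle (1 : ℝ))}
    {T : Set V} (m : ℝ) (hT : ((intersectionGraph A).induce T).CliqueFree 3)
    (hlift : ∀ v ∈ T, ∃ a b, A v = arc a b ∧ Icc a b ⊆ Ico m (m + 1)) :
    ((intersectionGraph A).induce T).IsAcyclic := by
  choose a b hA hbox using hlift
  have hG : (intersectionGraph A).induce T =
      intersectionGraph fun v : T => Icc (a v v.2) (b v v.2) := by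
    rw [intersectionGraph_induce,
      ← intersectionGraph_image_of_injOn (injOn_coe_Ico_s7 m) fun v : T => hbox v v.2]
    exact congrArg intersectionGraph (funext fun v => hA v v.2)
  rw [hG] at hT ⊢
  exact intersectionGraph_Icc_isAcyclic _ _ hT

lemma exists_isAcyclic_of_forall_sub_lt_one {V : Type*} (a b : V → ℝ) (S : Finset V)
    (hS : ((intersectionGraph fun v => arc (a v) (b v)).induce (S : Set V)).CliqueFree 3)
    (hab : ∀ v ∈ S, a v ≤ b v) (hshort : ∀ v ∈ S, b v - a v < 1) :
    ∃ T : Finset V, S.card ≤ T.card + 1 ∧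
      ((intersectionGraph fun v => arc (a v) (b v)).induce (T : Set V)).IsAcyclic := by
  classical
  rcases S.eq_empty_or_nonempty with rfl | ⟨v₀, hv₀⟩
  · exact ⟨∅, by simp, isAcyclic_induce_of_forall_arc_eq 0 hS (by simp)⟩
  set p : AddCircle (1 : ℝ) := ↑(a v₀)
  set D := (S.filter fun v => p ∈ arc (a v) (b v)).erase v₀
  have hD : D.card ≤ 1 := by
    have hp : p ∈ arc (a v₀) (b v₀) := mem_image_of_mem _ (left_mem_Icc.2 (hab v₀ hv₀))
    have := card_filter_mem_le_two_of_cliqueFree hS p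
    rw [Finset.card_erase_of_mem (Finset.mem_filter.2 ⟨hv₀, hp⟩)]
    omega
  refine ⟨S \ D, by linarith [Finset.card_le_card_sdiff_add_card (s := S) (t := D)], ?_⟩
  refine isAcyclic_induce_of_forall_arc_eq (a v₀)
    (hS.comap (induceHomOfLE _ (Finset.coe_subset.2 Finset.sdiff_subset)).isContained) ?_
  intro v hv
  rw [Finset.mem_coe, Finset.mem_sdiff] at hv
  refine exists_arc_eq_Icc_subset_Ico (a v₀) (hshort v hv.1) fun hpv => ?_
  by_contra hne
  exact hv.2 (Finset.mem_erase.2 ⟨fun h => hne (h ▸ rfl), Finset.mem_filter.2 ⟨hv.1, hpv⟩⟩)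

theorem stmt7_general {V : Type*} (a b : V → ℝ) (hab : ∀ v, a v ≤ b v)
    (t : ℕ)
    (ht : IsGreatest {n : ℕ | ∃ S : Finset V, S.card = n ∧
      ((intersectionGraph fun v => arc (a v) (b v)).induce (↑S : Set V)).CliqueFree 3} t) :
    ∃ S : Finset V, t ≤ S.card + 1 ∧
      ((intersectionGraph fun v => arc (a v) (b v)).induce (↑S : Set V)).IsAcyclic := by
  classical
  obtain ⟨S, rfl, hS⟩ := ht.1
  by_cases hlong : ∃ u ∈ S, 1 ≤ b u - a u
  · obtain ⟨u, hu, hlong⟩ := hlong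
    refine ⟨S.erase u, (Finset.card_erase_add_one hu).ge, ?_⟩
    rw [induce_erase_eq_bot_of_cliqueFree hS hu fun v _ hvu => ⟨hvu.symm, ?_⟩]
    · exact isAcyclic_bot
    · change (arc _ _ ∩ arc _ _).Nonempty
      rw [arc_eq_univ hlong, univ_inter]
      exact ⟨_, mem_image_of_mem _ (left_mem_Icc.2 (hab v))⟩
  · push Not at hlong
    exact exists_isAcyclic_of_forall_sub_lt_one a b S hS (fun v _ => hab v) hlong

theorem stmt7 {V : Type*} [Fintype V] (a b : V → ℝ) (hab : ∀ v, a v ≤ b v)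
    (t : ℕ)
    (ht : IsGreatest {n : ℕ | ∃ S : Finset V, S.card = n ∧
      ((intersectionGraph fun v => arc (a v) (b v)).induce (↑S : Set V)).CliqueFree 3} t) :
    ∃ S : Finset V, t ≤ S.card + 1 ∧
      ((intersectionGraph fun v => arc (a v) (b v)).induce (↑S : Set V)).IsAcyclic :=
  stmt7_general a b hab t ht
end
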